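/- Let δ_{i,j} (for 1 ≤ i ≤ j ≤ m) be nonnegative integers with δ_{i,j} ≤ j - i + 1, and let T = {c_{k₁},...,c_{k_r}} be the output of the greedy algorithm that scans c₁,...,c_m and adds c_k whenever some window [i,j] containing k satisfies δ_{i,j} ≥ |T ∩ C_{i,j}| + (j - k + 1). Then for every t ∈ [r] there exists a set T* ⊆ C of minimum size among sets satisfying |T* ∩ C_{i,j}| ≥ δ_{i,j} for all i ≤ j, such that {c_{k₁},...,c_{k_t}} ⊆ T*. In particular, the greedy output T has minimum size. -/

import Mathlib

open Classical

noncomputable def Cij {m : ℕ} (c : Fin m → ℝ) (i j : Fin m) : Finset ℝ :=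
  (Finset.univ.filter fun t => i ≤ t ∧ t ≤ j).image c

noncomputable def greedy {m : ℕ} (c : Fin m → ℝ) (δ : Fin m → Fin m → ℕ) : ℕ → Finset ℝ
  | 0 => ∅
  | (k+1) =>
    if h : k < m then
      if ∃ i j : Fin m, i ≤ ⟨k, h⟩ ∧ (⟨k, h⟩ : Fin m) ≤ j ∧
          (greedy c δ k ∩ Cij c i j).card + ((j : ℕ) - k + 1) ≤ δ i j
      then greedy c δ k ∪ {c ⟨k, h⟩} else greedy c δ k
    else greedy c δ k

/-- A set meets all the window demands `δ_{i,j}`. -/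
def MeetsDemands {m : ℕ} (c : Fin m → ℝ) (δ : Fin m → Fin m → ℕ) (S : Finset ℝ) : Prop :=
  ∀ i j : Fin m, i ≤ j → δ i j ≤ (S ∩ Cij c i j).card

/-!
The greedy prefix `G_n = greedy c δ n` satisfies `δ p q ≤ |G_n ∩ C_{p,q}| + (q + 1 - n)`: the
points of `C_{p,q}` not yet scanned can always make up the rest. In particular `G_n` meets every
window ending before position `n`.

Optimal sets containing `G_n` are carried along by an exchange. Suppose greedy picks `c_k`
because of the window `[i, j]`, and an optimal `T ⊇ G_k` misses `c_k`. As `T` meets `[i, j]` but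
has at most `j - k` of its points beyond `k`, it contains some `c_a ∉ G_k` with `a < k`.
Replacing `c_a` by `c_k` keeps the size; windows ending before `k` stay met thanks to `G_k`, and
every other window containing `c_a` also contains `c_k`.
-/

open Finset Function

def IsOptimal {m : ℕ} (c : Fin m → ℝ) (δ : Fin m → Fin m → ℕ) (T : Finset ℝ) : Prop :=
  T ⊆ univ.image c ∧ MeetsDemands c δ T ∧
    ∀ S ⊆ univ.image c, MeetsDemands c δ S → #T ≤ #S

theorem Cij_eq_image_Icc {m : ℕ} (c : Fin m → ℝ) (i j : Fin m) :
    Cij c i j = (Icc i j).image c := by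
  ext x
  simp [Cij]

theorem card_inter_le_card_inter_insert_erase {α : Type*} [DecidableEq α] {T C : Finset α}
    {x y : α} (hx : x ∉ T) (hxy : y ∈ C → x ∈ C) : #(T ∩ C) ≤ #(insert x (T.erase y) ∩ C) := by
  by_cases hy : y ∈ C
  · rw [insert_inter_of_mem (hxy hy), erase_inter,
      card_insert_of_notMem fun h ↦ hx (mem_inter.1 (mem_of_mem_erase h)).1]
    have := pred_card_le_card_erase (s := T ∩ C) (a := y)
    omega
  · refine card_le_card fun z hz ↦ ?_
    obtain ⟨hzT, hzC⟩ := mem_inter.1 hz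
    exact mem_inter.2 ⟨mem_insert_of_mem (mem_erase.2 ⟨fun h ↦ hy (h ▸ hzC), hzT⟩), hzC⟩

section

variable {m : ℕ} {c : Fin m → ℝ} {δ : Fin m → Fin m → ℕ}

theorem apply_mem_Cij_iff (hc : Injective c) {a i j : Fin m} :
    c a ∈ Cij c i j ↔ i ≤ a ∧ a ≤ j := by
  rw [Cij_eq_image_Icc, hc.mem_finset_image, mem_Icc]

theorem card_Cij (hc : Injective c) (i j : Fin m) : #(Cij c i j) = j + 1 - i := by
  rw [Cij_eq_image_Icc, card_image_of_injective _ hc, Fin.card_Icc]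

theorem greedy_succ_of_le {n : ℕ} (h : m ≤ n) : greedy c δ (n + 1) = greedy c δ n := by
  rw [greedy, dif_neg (by omega)]

theorem greedy_val_succ (k : Fin m) :
    greedy c δ (k + 1) =
      if ∃ i j : Fin m, i ≤ k ∧ k ≤ j ∧ #(greedy c δ k ∩ Cij c i j) + (j - k + 1) ≤ δ i j
      then insert (c k) (greedy c δ k) else greedy c δ k := by
  rw [greedy, dif_pos k.isLt, union_comm, ← insert_eq]

theorem greedy_subset_greedy_succ (n : ℕ) : greedy c δ n ⊆ greedy c δ (n + 1) := by
  rcases lt_or_ge n m with hn | hn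
  · obtain ⟨k, rfl⟩ : ∃ k : Fin m, (k : ℕ) = n := ⟨⟨n, hn⟩, rfl⟩
    rw [greedy_val_succ]
    split_ifs
    exacts [subset_insert _ _, Subset.rfl]
  · rw [greedy_succ_of_le hn]

theorem exists_lt_of_mem_greedy {n : ℕ} {x : ℝ} (hx : x ∈ greedy c δ n) :
    ∃ a : Fin m, (a : ℕ) < n ∧ c a = x := by
  induction n with
  | zero => simp [greedy] at hx
  | succ n ih =>
    rcases lt_or_ge n m with hn | hn
    · obtain ⟨k, rfl⟩ : ∃ k : Fin m, (k : ℕ) = n := ⟨⟨n, hn⟩, rfl⟩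
      rw [greedy_val_succ] at hx
      split_ifs at hx
      · rcases mem_insert.1 hx with rfl | hx
        · exact ⟨k, k.val.lt_succ_self, rfl⟩
        · obtain ⟨a, ha, rfl⟩ := ih hx
          exact ⟨a, by omega, rfl⟩
      · obtain ⟨a, ha, rfl⟩ := ih hx
        exact ⟨a, by omega, rfl⟩
    · rw [greedy_succ_of_le hn] at hx
      obtain ⟨a, ha, rfl⟩ := ih hx
      exact ⟨a, by omega, rfl⟩

theorem apply_notMem_greedy (hc : Injective c) {n : ℕ} {a : Fin m} (h : n ≤ a) :
    c a ∉ greedy c δ n := fun ha ↦ by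
  obtain ⟨b, hb, hba⟩ := exists_lt_of_mem_greedy ha
  rw [hc hba] at hb
  omega

theorem demand_le_card_inter_greedy_add (hc : Injective c)
    (hδ : ∀ i j : Fin m, i ≤ j → δ i j ≤ (j : ℕ) - (i : ℕ) + 1) {p q : Fin m} (hpq : p ≤ q)
    (n : ℕ) : δ p q ≤ #(greedy c δ n ∩ Cij c p q) + (q + 1 - n) := by
  have hδpq := hδ p q hpq
  induction n with
  | zero => omega
  | succ n ih =>
    rcases lt_or_ge (q : ℕ) n with hqn | hnq
    · have := card_le_card (inter_subset_inter_right (u := Cij c p q)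
        (greedy_subset_greedy_succ (c := c) (δ := δ) n))
      omega
    obtain ⟨k, rfl⟩ : ∃ k : Fin m, (k : ℕ) = n := ⟨⟨n, by omega⟩, rfl⟩
    rcases lt_or_ge k p with hkp | hpk
    · have : (k : ℕ) < p := hkp
      omega
    rw [greedy_val_succ]
    split_ifs with hadd
    · rw [insert_inter_of_mem ((apply_mem_Cij_iff hc).2 ⟨hpk, hnq⟩),
        card_insert_of_notMem fun h ↦ apply_notMem_greedy hc le_rfl (mem_inter.1 h).1]
      omega
    · push Not at hadd
      have := hadd p q hpk hnq
      omega

theorem meetsDemands_univ_image (hc : Injective c)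
    (hδ : ∀ i j : Fin m, i ≤ j → δ i j ≤ (j : ℕ) - (i : ℕ) + 1) :
    MeetsDemands c δ (univ.image c) := fun i j hij ↦ by
  rw [inter_eq_right.2 (Cij_eq_image_Icc c i j ▸ image_subset_image (subset_univ _)),
    card_Cij hc]
  have := hδ i j hij
  omega

theorem exists_isOptimal (hc : Injective c)
    (hδ : ∀ i j : Fin m, i ≤ j → δ i j ≤ (j : ℕ) - (i : ℕ) + 1) : ∃ T, IsOptimal c δ T := by
  obtain ⟨T, hT, hmin⟩ := exists_min_image ((univ.image c).powerset.filter (MeetsDemands c δ))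
    card ⟨univ.image c, by simp [meetsDemands_univ_image hc hδ]⟩
  simp only [mem_filter, mem_powerset] at hT hmin
  exact ⟨T, hT.1, hT.2, fun S hS hSδ ↦ hmin S ⟨hS, hSδ⟩⟩

theorem exists_lt_apply_mem_sdiff {G T : Finset ℝ} {i j k : Fin m}
    (hkT : c k ∉ T) (h : #(G ∩ Cij c i j) + ((j : ℕ) - k + 1) ≤ #(T ∩ Cij c i j)) :
    ∃ a < k, c a ∈ T ∧ c a ∉ G := by
  by_contra! hcon
  have hsub : (T ∩ Cij c i j) \ (G ∩ Cij c i j) ⊆ (Ioc k j).image c := by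
    intro x hx
    obtain ⟨⟨hxT, hxC⟩, hxGC⟩ := (mem_sdiff.trans (and_congr_left' mem_inter)).1 hx
    obtain ⟨a, ha, rfl⟩ := mem_image.1 (Cij_eq_image_Icc c i j ▸ hxC)
    have hka : k < a := lt_of_le_of_ne (not_lt.1 fun hak ↦ hxGC (mem_inter.2 ⟨hcon a hak hxT, hxC⟩))
      fun h ↦ hkT (h ▸ hxT)
    exact mem_image_of_mem c (mem_Ioc.2 ⟨hka, (mem_Icc.1 ha).2⟩)
  have := le_card_sdiff (G ∩ Cij c i j) (T ∩ Cij c i j)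
  have := (card_le_card hsub).trans card_image_le
  rw [Fin.card_Ioc] at this
  omega

theorem meetsDemands_insert_erase (hc : Injective c)
    (hδ : ∀ i j : Fin m, i ≤ j → δ i j ≤ (j : ℕ) - (i : ℕ) + 1) {T : Finset ℝ}
    (hT : MeetsDemands c δ T) {a k : Fin m} (hGT : greedy c δ k ⊆ T) (hak : a < k)
    (hkT : c k ∉ T) (haG : c a ∉ greedy c δ k) :
    MeetsDemands c δ (insert (c k) (T.erase (c a))) := by
  intro p q hpq
  rcases lt_or_ge q k with hqk | hkq
  · have hGT' : greedy c δ k ⊆ insert (c k) (T.erase (c a)) := fun x hx ↦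
      mem_insert_of_mem (mem_erase.2 ⟨fun h ↦ haG (h ▸ hx), hGT hx⟩)
    have := demand_le_card_inter_greedy_add hc hδ hpq k
    have := card_le_card (inter_subset_inter_right (u := Cij c p q) hGT')
    have : (q : ℕ) < k := hqk
    omega
  · refine (hT p q hpq).trans (card_inter_le_card_inter_insert_erase hkT fun ha ↦ ?_)
    rw [apply_mem_Cij_iff hc] at ha ⊢
    exact ⟨ha.1.trans hak.le, hkq⟩

theorem IsOptimal.exists_superset_greedy_succ (hc : Injective c)
    (hδ : ∀ i j : Fin m, i ≤ j → δ i j ≤ (j : ℕ) - (i : ℕ) + 1) {T : Finset ℝ}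
    (hT : IsOptimal c δ T) {n : ℕ} (hGT : greedy c δ n ⊆ T) :
    ∃ T', IsOptimal c δ T' ∧ greedy c δ (n + 1) ⊆ T' := by
  rcases lt_or_ge n m with hn | hn
  swap
  · exact ⟨T, hT, greedy_succ_of_le hn ▸ hGT⟩
  obtain ⟨k, rfl⟩ : ∃ k : Fin m, (k : ℕ) = n := ⟨⟨n, hn⟩, rfl⟩
  rw [greedy_val_succ]
  split_ifs with hadd
  swap
  · exact ⟨T, hT, hGT⟩
  by_cases hkT : c k ∈ T
  · exact ⟨T, hT, insert_subset hkT hGT⟩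
  obtain ⟨hTC, hTδ, hTmin⟩ := hT
  obtain ⟨i, j, hik, hkj, hforced⟩ := hadd
  obtain ⟨a, hak, haT, haG⟩ :=
    exists_lt_apply_mem_sdiff hkT (hforced.trans (hTδ i j (hik.trans hkj)))
  refine ⟨insert (c k) (T.erase (c a)), ⟨?_, meetsDemands_insert_erase hc hδ hTδ hGT hak hkT haG,
    ?_⟩, insert_subset_insert _ fun x hx ↦ mem_erase.2 ⟨fun h ↦ haG (h ▸ hx), hGT hx⟩⟩
  · exact insert_subset (mem_image_of_mem c (mem_univ k)) ((erase_subset _ _).trans hTC)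
  · rw [card_insert_of_notMem fun h ↦ hkT (mem_of_mem_erase h), card_erase_add_one haT]
    exact hTmin

theorem exists_isOptimal_greedy_subset (hc : Injective c)
    (hδ : ∀ i j : Fin m, i ≤ j → δ i j ≤ (j : ℕ) - (i : ℕ) + 1) (n : ℕ) :
    ∃ T, IsOptimal c δ T ∧ greedy c δ n ⊆ T := by
  induction n with
  | zero =>
    obtain ⟨T, hT⟩ := exists_isOptimal hc hδ
    exact ⟨T, hT, empty_subset T⟩
  | succ n ih =>
    obtain ⟨T, hT, hGT⟩ := ih
    exact hT.exists_superset_greedy_succ hc hδ hGT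

end

/-- For every `t`, some minimum-size demand-meeting set `Tstar` contains the first `t`
greedily chosen points (in increasing order); in particular the greedy output has
minimum size among demand-meeting subsets of `C`. -/
theorem greedy_prefix_extends_to_optimal {m : ℕ} (c : Fin m → ℝ) (hc : StrictMono c)
    (δ : Fin m → Fin m → ℕ)
    (hδ : ∀ i j : Fin m, i ≤ j → δ i j ≤ (j : ℕ) - (i : ℕ) + 1) :
    (∀ t : ℕ, t ≤ (greedy c δ m).card →
      ∃ Tstar ⊆ Finset.univ.image c,
        MeetsDemands c δ Tstar ∧
        (∀ S ⊆ Finset.univ.image c, MeetsDemands c δ S → Tstar.card ≤ S.card) ∧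
        (∀ x ∈ ((greedy c δ m).sort (· ≤ ·)).take t, x ∈ Tstar)) ∧
    (∀ S ⊆ Finset.univ.image c, MeetsDemands c δ S → (greedy c δ m).card ≤ S.card) := by
  obtain ⟨T, ⟨hTC, hTδ, hTmin⟩, hGT⟩ := exists_isOptimal_greedy_subset hc.injective hδ m
  refine ⟨fun t _ ↦ ⟨T, hTC, hTδ, hTmin, fun x hx ↦ ?_⟩,
    fun S hS hSδ ↦ (card_le_card hGT).trans (hTmin S hS hSδ)⟩
  exact hGT ((mem_sort _).1 (List.mem_of_mem_take hx))
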